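/- The functions X₀(t) = (1/2) sech t and Y₀(t) = −(1/2) sech t (tanh t + sech t) + 1/4 satisfy, for all t ∈ ℝ, the differential equations X₀'(t) = Y₀(t) + 2X₀(t)² − 1/4 and Y₀'(t) = −4X₀(t)Y₀(t) − 16X₀(t)³ + 2X₀(t), together with the boundary conditions (X₀(t), Y₀(t)) → (0, 1/4) as t → +∞ and as t → −∞. -/

import Mathlib

open Filter Topology

noncomputable section

/-- `X₀(t) = (1/2) sech t`. -/
def X0 (t : ℝ) : ℝ := (1 / 2) * (1 / Real.cosh t)

/-- `Y₀(t) = -(1/2) sech t (tanh t + sech t) + 1/4`. -/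
def Y0 (t : ℝ) : ℝ :=
  -(1 / 2) * (1 / Real.cosh t) * (Real.tanh t + 1 / Real.cosh t) + 1 / 4

/-! With `s = sech` and `τ = tanh` one has `s' = -s τ`, `τ' = s²` and `τ² + s² = 1`, so both
differential equations reduce to polynomial identities in `s` and `τ` modulo `τ² + s² = 1`.
At `±∞` the function `s` tends to `0` while `τ` stays bounded, which gives the limits. -/

namespace Real

theorem tanh_sq_add_one_div_cosh_sq (x : ℝ) : tanh x ^ 2 + (1 / cosh x) ^ 2 = 1 := by
  have hc := (cosh_pos x).ne'
  rw [tanh_eq_sinh_div_cosh]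
  field_simp
  linear_combination -cosh_sq_sub_sinh_sq x

theorem hasDerivAt_one_div_cosh (x : ℝ) :
    HasDerivAt (fun t => 1 / cosh t) (-(1 / cosh x) * tanh x) x := by
  have hc := (cosh_pos x).ne'
  refine ((hasDerivAt_const x 1).div (hasDerivAt_cosh x) hc).congr_deriv ?_
  rw [tanh_eq_sinh_div_cosh]
  field_simp
  ring

theorem hasDerivAt_tanh (x : ℝ) : HasDerivAt tanh ((1 / cosh x) ^ 2) x := by
  have hc := (cosh_pos x).ne'
  rw [show tanh = fun t => sinh t / cosh t from funext tanh_eq_sinh_div_cosh]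
  refine ((hasDerivAt_sinh x).div (hasDerivAt_cosh x) hc).congr_deriv ?_
  field_simp
  linear_combination cosh_sq_sub_sinh_sq x

theorem tendsto_cosh_atTop : Tendsto cosh atTop atTop := by
  refine tendsto_atTop_mono (fun t => ?_) (tendsto_exp_atTop.atTop_div_const two_pos)
  rw [cosh_eq]
  linarith [exp_pos (-t)]

theorem tendsto_cosh_atBot : Tendsto cosh atBot atTop := by
  simpa only [Function.comp_def, cosh_neg] using tendsto_cosh_atTop.comp tendsto_neg_atBot_atTop

end Real

open Real

theorem hasDerivAt_X0 (t : ℝ) : HasDerivAt X0 (Y0 t + 2 * X0 t ^ 2 - 1 / 4) t := by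
  refine ((hasDerivAt_one_div_cosh t).const_mul (1 / 2)).congr_deriv ?_
  simp only [X0, Y0]
  ring

theorem hasDerivAt_Y0 (t : ℝ) :
    HasDerivAt Y0 (-4 * X0 t * Y0 t - 16 * X0 t ^ 3 + 2 * X0 t) t := by
  refine ((((hasDerivAt_one_div_cosh t).const_mul (-(1 / 2))).mul
    ((hasDerivAt_tanh t).add (hasDerivAt_one_div_cosh t))).add_const (1 / 4)).congr_deriv ?_
  simp only [X0, Y0, Pi.add_apply]
  linear_combination (1 / 2 * (1 / cosh t)) * tanh_sq_add_one_div_cosh_sq t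

theorem tendsto_X0_Y0_of_tendsto_cosh {l : Filter ℝ} (h : Tendsto cosh l atTop) :
    Tendsto (fun t => (X0 t, Y0 t)) l (𝓝 ((0 : ℝ), (1 / 4 : ℝ))) := by
  have hsech : Tendsto (fun t => 1 / cosh t) l (𝓝 0) :=
    h.inv_tendsto_atTop.congr fun t => (one_div _).symm
  have hbdd : IsBoundedUnder (· ≤ ·) l (fun t => ‖tanh t + 1 / cosh t‖) := by
    refine isBoundedUnder_of ⟨2, fun t => ?_⟩
    have hsech_le : 1 / cosh t ≤ 1 := (div_le_one (cosh_pos t)).2 (one_le_cosh t)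
    calc ‖tanh t + 1 / cosh t‖ ≤ |tanh t| + |1 / cosh t| := norm_add_le _ _
      _ ≤ 1 + 1 := by
        gcongr
        · exact (abs_tanh_lt_one t).le
        · rwa [abs_of_pos (by positivity)]
      _ = 2 := by norm_num
  have hcoeff : Tendsto (fun t => -(1 / 2) * (1 / cosh t)) l (𝓝 0) := by
    simpa only [mul_zero] using hsech.const_mul (-(1 / 2))
  simp only [X0, Y0]
  exact .prodMk_nhds (by simpa only [mul_zero] using hsech.const_mul (1 / 2))
    (by simpa only [zero_add] using (hcoeff.zero_mul_isBoundedUnder_le hbdd).add_const (1 / 4))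

/-- `X₀, Y₀` solve `X₀' = Y₀ + 2X₀² - 1/4`, `Y₀' = -4X₀Y₀ - 16X₀³ + 2X₀`,
with `(X₀, Y₀) → (0, 1/4)` as `t → ±∞`. -/
theorem lowest_order_separatrix_solution :
    (∀ t : ℝ, HasDerivAt X0 (Y0 t + 2 * X0 t ^ 2 - 1 / 4) t) ∧
    (∀ t : ℝ, HasDerivAt Y0 (-4 * X0 t * Y0 t - 16 * X0 t ^ 3 + 2 * X0 t) t) ∧
    Tendsto (fun t => (X0 t, Y0 t)) atTop (𝓝 ((0 : ℝ), (1 / 4 : ℝ))) ∧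
    Tendsto (fun t => (X0 t, Y0 t)) atBot (𝓝 ((0 : ℝ), (1 / 4 : ℝ))) :=
  ⟨hasDerivAt_X0, hasDerivAt_Y0, tendsto_X0_Y0_of_tendsto_cosh tendsto_cosh_atTop,
    tendsto_X0_Y0_of_tendsto_cosh tendsto_cosh_atBot⟩
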